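/- Let A be an M × N nonsingular-by-columns (NSC) matrix over F_q and C_1,…,C_M codes of length n over F_q. Then d_b([C_1,…,C_M]·A) ≥ min{(N − i + 1) · d_b(C_i) : i = 1,…,M}. -/
import Mathlib


open scoped Classical
open Finset

noncomputable def bwt {F : Type*} [Field F] (n b : ℕ) [NeZero n] (x : ZMod n → F) : ℕ :=
  (Finset.univ.filter (fun i : ZMod n => ∃ j < b, x (i + (j : ZMod n)) ≠ 0)).card

noncomputable def bDist {F : Type*} [Field F] (n b : ℕ) [NeZero n]
    (C : Set (ZMod n → F)) : ℕ :=
  sInf {w | ∃ u ∈ C, ∃ v ∈ C, u ≠ v ∧ bwt n b (u - v) = w}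

def IsHole {n : ℕ} [NeZero n] (J H : Finset (ZMod n)) : Prop :=
  ∃ (a : ZMod n) (h : ℕ), 0 < h ∧
    H = Finset.image (fun t : ℕ => a + (t : ZMod n) + 1) (Finset.range h) ∧
    (∀ x ∈ H, x ∉ J) ∧ a ∈ J ∧ a + (h : ZMod n) + 1 ∈ J

noncomputable def hSupp {F : Type*} [Field F] {n : ℕ} [NeZero n] (x : ZMod n → F) :
    Finset (ZMod n) :=
  Finset.univ.filter (fun i => x i ≠ 0)
instance neZeroMul {a b : ℕ} [NeZero a] [NeZero b] : NeZero (a * b) :=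
  ⟨Nat.mul_ne_zero (NeZero.ne a) (NeZero.ne b)⟩

noncomputable def mpVec {F : Type*} [Field F] (n N M : ℕ) [NeZero n] [NeZero N]
    (A : Matrix (Fin M) (Fin N) F) (c : Fin M → ZMod n → F) : ZMod (n * N) → F :=
  fun k => ∑ ℓ : Fin M, c ℓ ((k.val % n : ℕ) : ZMod n) *
    A ℓ ⟨k.val / n, Nat.div_lt_of_lt_mul (ZMod.val_lt k)⟩

def mpCode {F : Type*} [Field F] (n N M : ℕ) [NeZero n] [NeZero N]
    (A : Matrix (Fin M) (Fin N) F) (C : Fin M → Set (ZMod n → F)) :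
    Set (ZMod (n * N) → F) :=
  {v | ∃ c : Fin M → ZMod n → F, (∀ ℓ, c ℓ ∈ C ℓ) ∧ v = mpVec n N M A c}

noncomputable def minHamming {F : Type*} [Field F] {N : ℕ} (S : Set (Fin N → F)) : ℕ :=
  sInf {w | ∃ v ∈ S, v ≠ 0 ∧ hammingNorm v = w}

def NSC {F : Type*} [Field F] {M N : ℕ} (A : Matrix (Fin M) (Fin N) F) : Prop :=
  ∀ t : ℕ, 0 < t → ∀ htM : t ≤ M, ∀ g : Fin t → Fin N, StrictMono g →
    (Matrix.of (fun r c : Fin t => A (Fin.castLE htM r) (g c))).det ≠ 0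

set_option linter.unusedSectionVars false
set_option linter.unusedVariables false
set_option maxHeartbeats 1000000

section helpers
variable {F : Type*} [Field F] {n N M : ℕ} [NeZero n] [NeZero N]

lemma mpVec_sub' (A : Matrix (Fin M) (Fin N) F) (c c' : Fin M → ZMod n → F) :
    mpVec n N M A c - mpVec n N M A c' = mpVec n N M A (fun ℓ => c ℓ - c' ℓ) := by
  funext k
  simp [mpVec, sub_mul, Finset.sum_sub_distrib]

lemma block_lt' (j : Fin N) (q : ZMod n) : j.val * n + q.val < n * N := by
  have h1 : q.val < n := ZMod.val_lt q
  have h2 : j.val < N := j.isLt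
  calc j.val * n + q.val < (j.val + 1) * n := by nlinarith
  _ ≤ N * n := Nat.mul_le_mul_right n h2
  _ = n * N := Nat.mul_comm N n

lemma mpVec_apply_block' (A : Matrix (Fin M) (Fin N) F) (d : Fin M → ZMod n → F)
    (j : Fin N) (q : ZMod n) :
    mpVec n N M A d (((j.val * n + q.val : ℕ) : ZMod (n * N))) = ∑ ℓ, d ℓ q * A ℓ j := by
  have hv : (((j.val * n + q.val : ℕ) : ZMod (n * N))).val = j.val * n + q.val :=
    ZMod.val_cast_of_lt (block_lt' j q)
  have hq : q.val < n := ZMod.val_lt q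
  have hmod : (j.val * n + q.val) % n = q.val := by
    simp [Nat.add_mul_mod_self_right, Nat.mod_eq_of_lt hq, Nat.mul_mod_right,
      Nat.add_mod, Nat.mul_mod_left]
  have hdiv : (j.val * n + q.val) / n = j.val := by
    rw [Nat.add_comm, Nat.add_mul_div_right _ _ (Nat.pos_of_ne_zero (NeZero.ne n)),
      Nat.div_eq_of_lt hq, Nat.zero_add]
  simp only [mpVec, hv, hmod, hdiv]
  congr 1
  funext ℓ
  congr 1
  rw [ZMod.natCast_zmod_val]

lemma perPos' (hMN : M ≤ N) (A : Matrix (Fin M) (Fin N) F) (hA : NSC A)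
    (d : Fin M → ZMod n → F) (t : Fin M) (hmax : ∀ ℓ, t < ℓ → d ℓ = 0)
    (q : ZMod n) (hq : d t q ≠ 0) :
    N - t.val ≤ (univ.filter (fun j : Fin N => (∑ ℓ, d ℓ q * A ℓ j) ≠ 0)).card := by
  by_contra hcon
  push_neg at hcon
  set Znz := univ.filter (fun j : Fin N => (∑ ℓ, d ℓ q * A ℓ j) ≠ 0) with hZnz
  set Z := univ.filter (fun j : Fin N => ¬ ((∑ ℓ, d ℓ q * A ℓ j) ≠ 0)) with hZ
  have hsum : Znz.card + Z.card = N := by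
    rw [hZnz, hZ, Finset.card_filter_add_card_filter_not]
    simp
  have htM : t.val < M := t.isLt
  have hZcard : t.val + 1 ≤ Z.card := by omega
  obtain ⟨Z', hZ'sub, hZ'card⟩ := Finset.exists_subset_card_eq hZcard
  have hg : Z'.card = t.val + 1 := hZ'card
  set g : Fin (t.val + 1) ↪o Fin N := Z'.orderEmbOfFin hg with hgdef
  have hdet := hA (t.val + 1) (Nat.succ_pos _) (by omega) g g.strictMono
  set Bm : Matrix (Fin (t.val + 1)) (Fin (t.val + 1)) F :=
    Matrix.of (fun r c : Fin (t.val + 1) => A (Fin.castLE (by omega) r) (g c)) with hBm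
  set v : Fin (t.val + 1) → F := fun r => d (Fin.castLE (by omega) r) q with hv
  have hvB : Matrix.vecMul v Bm = 0 := by
    funext c
    have hmem : g c ∈ Z := hZ'sub (Z'.orderEmbOfFin_mem hg c)
    have hzero : (∑ ℓ, d ℓ q * A ℓ (g c)) = 0 := by
      rw [hZ] at hmem
      simpa using (Finset.mem_filter.mp hmem).2
    have hexp : Matrix.vecMul v Bm c = ∑ r : Fin (t.val + 1), v r * Bm r c := rfl
    have hre : ∑ r : Fin (t.val + 1), v r * Bm r c
        = ∑ ℓ ∈ univ.filter (fun ℓ : Fin M => ℓ.val ≤ t.val), d ℓ q * A ℓ (g c) := by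
      apply Finset.sum_nbij' (i := fun r : Fin (t.val + 1) => Fin.castLE (by omega) r)
        (j := fun ℓ : Fin M => (⟨min ℓ.val t.val, by omega⟩ : Fin (t.val + 1)))
      · intro r _
        simp only [Finset.mem_filter, Finset.mem_univ, true_and, Fin.coe_castLE]
        omega
      · intro ℓ _; simp
      · intro r _
        ext
        simp only [Fin.castLE]
        omega
      · intro ℓ hℓ
        simp only [Finset.mem_filter, Finset.mem_univ, true_and] at hℓ
        ext
        simp only [Fin.castLE]
        omega
      · intro r _; rfl
    have hfull : ∑ ℓ ∈ univ.filter (fun ℓ : Fin M => ℓ.val ≤ t.val), d ℓ q * A ℓ (g c)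
        = ∑ ℓ, d ℓ q * A ℓ (g c) := by
      apply Finset.sum_subset (Finset.filter_subset _ _)
      intro ℓ _ hnot
      simp only [Finset.mem_filter, Finset.mem_univ, true_and, not_le] at hnot
      have : t < ℓ := by
        rw [Fin.lt_def]; omega
      rw [hmax ℓ this]; simp
    have hfin : Matrix.vecMul v Bm c = 0 := by rw [hexp, hre, hfull, hzero]
    simpa using hfin
  have hvz : v = 0 := by
    have h1 : Matrix.vecMul (Matrix.vecMul v Bm) Bm⁻¹ = Matrix.vecMul v (Bm * Bm⁻¹) :=
      Matrix.vecMul_vecMul v Bm Bm⁻¹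
    rw [hvB, Matrix.mul_nonsing_inv Bm (isUnit_iff_ne_zero.mpr hdet),
      Matrix.vecMul_one, Matrix.zero_vecMul] at h1
    exact h1.symm
  apply hq
  have ht' : (Fin.castLE (by omega : t.val + 1 ≤ M) (Fin.last t.val)) = t := by
    ext; simp
  have hz := congrFun hvz (Fin.last t.val)
  simp only [hv, Pi.zero_apply] at hz
  rwa [ht'] at hz

lemma mainBound' {b : ℕ} (hMN : M ≤ N) (hb1 : 1 ≤ b) (hbn : b ≤ n)
    (A : Matrix (Fin M) (Fin N) F) (hA : NSC A)
    (d : Fin M → ZMod n → F) (t : Fin M) (hmax : ∀ ℓ, t < ℓ → d ℓ = 0) :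
    bwt n b (d t) * (N - t.val) ≤ bwt (n * N) b (mpVec n N M A d) := by
  classical
  set P0 := univ.filter (fun p : ZMod n => ∃ l < b, d t (p + (l : ZMod n)) ≠ 0) with hP0
  have hex : ∀ p : ZMod n, ∃ l : ℕ, p ∈ P0 → l < b ∧ d t (p + (l : ZMod n)) ≠ 0 := by
    intro p
    by_cases hp : p ∈ P0
    · obtain ⟨l, hl, hne⟩ := (Finset.mem_filter.mp hp).2
      exact ⟨l, fun _ => ⟨hl, hne⟩⟩
    · exact ⟨0, fun h => absurd h hp⟩
  choose lp hlp using hex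
  set q : ZMod n → ZMod n := fun p => p + (lp p : ZMod n) with hqdef
  set x := mpVec n N M A d with hx
  set T := univ.filter (fun k : ZMod (n * N) => ∃ l < b, x (k + (l : ZMod (n * N))) ≠ 0)
    with hT
  set Js : ZMod n → Finset (Fin N) :=
    fun p => univ.filter (fun j : Fin N => (∑ ℓ, d ℓ (q p) * A ℓ j) ≠ 0) with hJs
  set Φ : (Σ _ : ZMod n, Fin N) → ZMod (n * N) := fun z =>
    ((z.2.val * n + (q z.1).val : ℕ) : ZMod (n * N)) - ((lp z.1 : ℕ) : ZMod (n * N)) with hΦ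
  have hΦadd : ∀ z : (Σ _ : ZMod n, Fin N),
      Φ z + ((lp z.1 : ℕ) : ZMod (n * N)) = ((z.2.val * n + (q z.1).val : ℕ) : ZMod (n * N)) := by
    intro z; rw [hΦ]; ring
  have key : ∀ z ∈ P0.sigma (fun p => Js p), Φ z ∈ T := by
    rintro ⟨p, j⟩ hz
    rw [Finset.mem_sigma] at hz
    obtain ⟨hp, hj⟩ := hz
    rw [hT, Finset.mem_filter]
    refine ⟨Finset.mem_univ _, lp p, (hlp p hp).1, ?_⟩
    have := hΦadd ⟨p, j⟩
    simp only at this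
    rw [this, hx, mpVec_apply_block']
    rw [hJs] at hj
    simpa using (Finset.mem_filter.mp hj).2
  have hπ : ∀ z : (Σ _ : ZMod n, Fin N),
      (ZMod.castHom (dvd_mul_right n N) (ZMod n)) (Φ z) = z.1 := by
    rintro ⟨p, j⟩
    rw [hΦ]
    simp only [map_sub, map_natCast]
    push_cast
    rw [ZMod.natCast_self]
    rw [hqdef]
    simp [ZMod.natCast_zmod_val]
  have hinj : Set.InjOn Φ (P0.sigma (fun p => Js p)) := by
    rintro ⟨p, j⟩ hz ⟨p', j'⟩ hz' heq
    have hp : p = p' := by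
      have h1 := hπ ⟨p, j⟩
      have h2 := hπ ⟨p', j'⟩
      simp only at h1 h2
      rw [← h1, ← h2, heq]
    subst hp
    have hval : ((j.val * n + (q p).val : ℕ) : ZMod (n * N))
        = ((j'.val * n + (q p).val : ℕ) : ZMod (n * N)) := by
      have h1 := hΦadd ⟨p, j⟩
      have h2 := hΦadd ⟨p, j'⟩
      simp only at h1 h2
      rw [← h1, ← h2, heq]
    have hval2 : j.val * n + (q p).val = j'.val * n + (q p).val := by
      have e1 := ZMod.val_cast_of_lt (n := n * N) (block_lt' j (q p))
      have e2 := ZMod.val_cast_of_lt (n := n * N) (block_lt' j' (q p))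
      rw [← e1, ← e2, hval]
    have : j = j' := by
      ext
      have hn : 0 < n := Nat.pos_of_ne_zero (NeZero.ne n)
      exact Nat.eq_of_mul_eq_mul_right hn (by omega)
    rw [this]
  have hcard1 : (P0.sigma (fun p => Js p)).card ≤ T.card :=
    Finset.card_le_card_of_injOn Φ key hinj
  have hcard2 : ∑ p ∈ P0, (Js p).card = (P0.sigma (fun p => Js p)).card :=
    (Finset.card_sigma P0 _).symm
  have hcard3 : P0.card * (N - t.val) ≤ ∑ p ∈ P0, (Js p).card := by
    have hall : ∀ p ∈ P0, N - t.val ≤ (Js p).card := by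
      intro p hp
      exact perPos' hMN A hA d t hmax (q p) (hlp p hp).2
    have h := Finset.card_nsmul_le_sum P0 (fun p => (Js p).card) (N - t.val) hall
    simpa [smul_eq_mul] using h
  have hbwt1 : bwt n b (d t) = P0.card := rfl
  have hbwt2 : bwt (n * N) b x = T.card := rfl
  rw [hbwt1, hbwt2]
  omega

lemma bwt_pos' {b : ℕ} (hb1 : 1 ≤ b) (y : ZMod n → F) (hy : y ≠ 0) : 1 ≤ bwt n b y := by
  obtain ⟨p, hp⟩ : ∃ p, y p ≠ 0 := by
    by_contra h
    push_neg at h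
    exact hy (funext fun p => h p)
  have hmem : p ∈ univ.filter (fun i : ZMod n => ∃ j < b, y (i + (j : ZMod n)) ≠ 0) := by
    rw [Finset.mem_filter]
    exact ⟨Finset.mem_univ _, 0, hb1, by simpa using hp⟩
  exact Finset.card_pos.mpr ⟨p, hmem⟩

lemma bwt_zero' {b : ℕ} (y : ZMod n → F) (hy : bwt n b y ≠ 0) : y ≠ 0 := by
  intro h
  apply hy
  rw [h]
  have : (univ.filter (fun i : ZMod n => ∃ j < b, (0 : ZMod n → F) (i + (j : ZMod n)) ≠ 0))
      = ∅ := by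
    ext i; simp
  rw [bwt, this, Finset.card_empty]
end helpers

/-- if `A` is NSC, then
`d_b([C_1,…,C_M]·A) ≥ min{(N - i + 1) · d_b(C_i)}` (with `i` running 1-based;
here `i : Fin M` is 0-based, so `N - i + 1` becomes `N - i.val`). -/
theorem stmt7 {F : Type*} [Field F] {n N M b : ℕ} [NeZero n] [NeZero N]
    (hMN : M ≤ N) (hb1 : 1 ≤ b) (hbn : b ≤ n)
    (A : Matrix (Fin M) (Fin N) F) (hA : NSC A)
    (C : Fin M → Set (ZMod n → F)) (hC : ∀ ℓ, (C ℓ).Nonempty) :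
    sInf {w | ∃ i : Fin M, w = (N - i.val) * bDist n b (C i)}
      ≤ bDist (n * N) b (mpCode n N M A C) := by
  classical
  rcases Nat.eq_zero_or_pos M with hM0 | hMpos
  · have hempty : {w | ∃ i : Fin M, w = (N - i.val) * bDist n b (C i)} = ∅ := by
      ext w
      simp only [Set.mem_setOf_eq, Set.mem_empty_iff_false, iff_false, not_exists]
      intro i
      exact absurd i.isLt (by omega)
    rw [hempty, Nat.sInf_empty]
    exact Nat.zero_le _
  · -- key step: the weight bound for any pair of distinct tuples
    have hstep : ∀ c c' : Fin M → ZMod n → F, (∀ ℓ, c ℓ ∈ C ℓ) → (∀ ℓ, c' ℓ ∈ C ℓ) →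
        (∃ ℓ, c ℓ ≠ c' ℓ) →
        (sInf {w | ∃ i : Fin M, w = (N - i.val) * bDist n b (C i)}
          ≤ bwt (n * N) b (mpVec n N M A c - mpVec n N M A c')
          ∧ mpVec n N M A c ≠ mpVec n N M A c') := by
      intro c c' hcm hcm' hne
      set d : Fin M → ZMod n → F := fun ℓ => c ℓ - c' ℓ with hd
      have hfil : (univ.filter (fun ℓ : Fin M => d ℓ ≠ 0)).Nonempty := by
        obtain ⟨ℓ, hℓ⟩ := hne
        refine ⟨ℓ, Finset.mem_filter.mpr ⟨Finset.mem_univ _, ?_⟩⟩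
        intro h
        apply hℓ
        funext p
        have := congrFun h p
        simp only [hd, Pi.sub_apply, Pi.zero_apply, sub_eq_zero] at this
        exact this
      set t := (univ.filter (fun ℓ : Fin M => d ℓ ≠ 0)).max' hfil with ht
      have hmax : ∀ ℓ, t < ℓ → d ℓ = 0 := by
        intro ℓ hℓ
        by_contra hdl
        have : ℓ ∈ univ.filter (fun ℓ : Fin M => d ℓ ≠ 0) :=
          Finset.mem_filter.mpr ⟨Finset.mem_univ _, hdl⟩
        exact absurd (Finset.le_max' _ ℓ this) (not_le.mpr hℓ)
      have hdt : d t ≠ 0 := by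
        have := (univ.filter (fun ℓ : Fin M => d ℓ ≠ 0)).max'_mem hfil
        exact (Finset.mem_filter.mp this).2
      have hbound := mainBound' hMN hb1 hbn A hA d t hmax
      have hsub : mpVec n N M A c - mpVec n N M A c' = mpVec n N M A d := mpVec_sub' A c c'
      have hdist : bDist n b (C t) ≤ bwt n b (d t) := by
        apply Nat.sInf_le
        refine ⟨c t, hcm t, c' t, hcm' t, ?_, rfl⟩
        intro h
        apply hdt
        funext p
        simp [hd, h]
      have hNt : 1 ≤ N - t.val := by
        have := t.isLt
        omega
      have hpos : 1 ≤ bwt n b (d t) := bwt_pos' hb1 (d t) hdt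
      have hchain : sInf {w | ∃ i : Fin M, w = (N - i.val) * bDist n b (C i)}
          ≤ bwt (n * N) b (mpVec n N M A d) := by
        calc sInf {w | ∃ i : Fin M, w = (N - i.val) * bDist n b (C i)}
            ≤ (N - t.val) * bDist n b (C t) := Nat.sInf_le ⟨t, rfl⟩
        _ ≤ (N - t.val) * bwt n b (d t) := Nat.mul_le_mul_left _ hdist
        _ = bwt n b (d t) * (N - t.val) := Nat.mul_comm _ _
        _ ≤ bwt (n * N) b (mpVec n N M A d) := hbound
      have hxpos : 1 ≤ bwt (n * N) b (mpVec n N M A d) := by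
        calc 1 = 1 * 1 := rfl
        _ ≤ bwt n b (d t) * (N - t.val) := Nat.mul_le_mul hpos hNt
        _ ≤ _ := hbound
      constructor
      · rw [hsub]; exact hchain
      · intro h
        have : mpVec n N M A d ≠ 0 := bwt_zero' (mpVec n N M A d) (Nat.one_le_iff_ne_zero.mp hxpos)
        apply this
        rw [← hsub, h, sub_self]
    -- case split on whether some code has two distinct words
    by_cases hsing : ∀ i : Fin M, ∀ a ∈ C i, ∀ a' ∈ C i, a = a'
    · have i0 : Fin M := ⟨0, hMpos⟩
      have hz : bDist n b (C i0) = 0 := by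
        have : {w | ∃ u ∈ C i0, ∃ v ∈ C i0, u ≠ v ∧ bwt n b (u - v) = w} = ∅ := by
          ext w
          simp only [Set.mem_setOf_eq, Set.mem_empty_iff_false, iff_false]
          rintro ⟨u, hu, v, hv, huv, -⟩
          exact huv (hsing i0 u hu v hv)
        rw [bDist, this, Nat.sInf_empty]
      have : sInf {w | ∃ i : Fin M, w = (N - i.val) * bDist n b (C i)} ≤ 0 :=
        Nat.sInf_le ⟨i0, by rw [hz, Nat.mul_zero]⟩
      omega
    · push_neg at hsing
      obtain ⟨i, a, ha, a', ha', haa⟩ := hsing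
      set c1 : Fin M → ZMod n → F := Function.update (fun ℓ => (hC ℓ).some) i a with hc1
      set c2 : Fin M → ZMod n → F := Function.update (fun ℓ => (hC ℓ).some) i a' with hc2
      have hc1m : ∀ ℓ, c1 ℓ ∈ C ℓ := by
        intro ℓ
        rw [hc1]
        by_cases h : ℓ = i
        · subst h; simp [ha]
        · simp [Function.update_of_ne h]
          exact (hC ℓ).some_mem
      have hc2m : ∀ ℓ, c2 ℓ ∈ C ℓ := by
        intro ℓ
        rw [hc2]
        by_cases h : ℓ = i
        · subst h; simp [ha']
        · simp [Function.update_of_ne h]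
          exact (hC ℓ).some_mem
      have hne12 : ∃ ℓ, c1 ℓ ≠ c2 ℓ := by
        refine ⟨i, ?_⟩
        rw [hc1, hc2]
        simpa using haa
      obtain ⟨-, hne⟩ := hstep c1 c2 hc1m hc2m hne12
      have hTne : {w | ∃ u ∈ mpCode n N M A C, ∃ v ∈ mpCode n N M A C,
          u ≠ v ∧ bwt (n * N) b (u - v) = w}.Nonempty := by
        refine ⟨bwt (n * N) b (mpVec n N M A c1 - mpVec n N M A c2),
          mpVec n N M A c1, ⟨c1, hc1m, rfl⟩, mpVec n N M A c2, ⟨c2, hc2m, rfl⟩, hne, rfl⟩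
      rw [bDist]
      apply le_csInf hTne
      rintro w ⟨u, ⟨c, hcm, rfl⟩, v, ⟨c', hcm', rfl⟩, huv, rfl⟩
      have hexℓ : ∃ ℓ, c ℓ ≠ c' ℓ := by
        by_contra h
        push_neg at h
        exact huv (by funext k; rw [funext h])
      exact (hstep c c' hcm hcm' hexℓ).1
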